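/- The space Ĩ with the order topology induced by <_XY is connected. -/
import Mathlib


/-- The set of intuitionistic fuzzy values Ĩ = {⟨μ,ν⟩ ∈ [0,1]² : μ + ν ≤ 1}. -/
def IFV : Set (ℝ × ℝ) :=
  {p | 0 ≤ p.1 ∧ p.1 ≤ 1 ∧ 0 ≤ p.2 ∧ p.2 ≤ 1 ∧ p.1 + p.2 ≤ 1}

/-- Score function s(α) = μ_α − ν_α. -/
def sc (p : ℝ × ℝ) : ℝ := p.1 - p.2

/-- Accuracy function h(α) = μ_α + ν_α. -/
def ac (p : ℝ × ℝ) : ℝ := p.1 + p.2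

/-- Strict Xu–Yager order. -/
def ltXY (a b : ℝ × ℝ) : Prop := sc a < sc b ∨ (sc a = sc b ∧ ac a < ac b)

/-- Nonstrict Xu–Yager order. -/
def leXY (a b : ℝ × ℝ) : Prop := sc a < sc b ∨ (sc a = sc b ∧ ac a ≤ ac b)

/-- The space of IFVs as a type. -/
def IFVt : Type := {p : ℝ × ℝ // p ∈ IFV}

/-- The linear order on IFVs given by the Xu–Yager order
(lexicographic in (score, accuracy)). -/
noncomputable instance : LinearOrder IFVt :=
  LinearOrder.lift' (fun x : IFVt => toLex (sc x.1, ac x.1)) (by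
    intro x y hxy
    have h1 : sc x.1 = sc y.1 := congrArg (fun z => (ofLex z).1) hxy
    have h2 : ac x.1 = ac y.1 := congrArg (fun z => (ofLex z).2) hxy
    simp only [sc, ac] at h1 h2
    have e1 : x.1.1 = y.1.1 := by linarith
    have e2 : x.1.2 = y.1.2 := by linarith
    exact Subtype.ext (Prod.ext e1 e2))

/-- The order topology on IFVs induced by the linear order <_XY. -/
noncomputable instance : TopologicalSpace IFVt := Preorder.topology IFVt

instance : OrderTopology IFVt := ⟨rfl⟩

namespace IFVaux

/-- score of an IFV point -/
def scv (x : IFVt) : ℝ := sc x.1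
/-- accuracy of an IFV point -/
def acv (x : IFVt) : ℝ := ac x.1

lemma le_iff (x y : IFVt) : x ≤ y ↔ scv x < scv y ∨ (scv x = scv y ∧ acv x ≤ acv y) := by
  show toLex (sc x.1, ac x.1) ≤ toLex (sc y.1, ac y.1) ↔ _
  rw [Prod.Lex.le_iff]
  exact Iff.rfl

lemma lt_iff (x y : IFVt) : x < y ↔ scv x < scv y ∨ (scv x = scv y ∧ acv x < acv y) := by
  show toLex (sc x.1, ac x.1) < toLex (sc y.1, ac y.1) ↔ _
  rw [Prod.Lex.lt_iff]
  exact Iff.rfl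

lemma abs_scv_le (x : IFVt) : |scv x| ≤ acv x := by
  obtain ⟨h1, h2, h3, h4, h5⟩ := x.2
  rw [abs_le]; constructor <;> simp only [scv, acv, sc, ac] <;> linarith

lemma acv_le_one (x : IFVt) : acv x ≤ 1 := by
  obtain ⟨h1, h2, h3, h4, h5⟩ := x.2
  simp only [acv, ac]; linarith

lemma scv_le_one (x : IFVt) : scv x ≤ 1 :=
  (abs_le.mp ((abs_scv_le x).trans (acv_le_one x))).2

lemma neg_one_le_scv (x : IFVt) : -1 ≤ scv x :=
  (abs_le.mp ((abs_scv_le x).trans (acv_le_one x))).1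

/-- Build an IFV point from its score and accuracy. -/
noncomputable def mk (s h : ℝ) (hs : |s| ≤ h) (h1 : h ≤ 1) : IFVt :=
  ⟨((h + s) / 2, (h - s) / 2), by
    have := abs_le.mp hs
    refine ⟨by linarith [this.1], by linarith [this.2], by linarith [this.2],
      by linarith [this.1], by linarith⟩⟩

@[simp] lemma scv_mk (s h : ℝ) (hs : |s| ≤ h) (h1 : h ≤ 1) : scv (mk s h hs h1) = s := by
  simp [scv, mk, sc]; ring

@[simp] lemma acv_mk (s h : ℝ) (hs : |s| ≤ h) (h1 : h ≤ 1) : acv (mk s h hs h1) = h := by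
  simp [acv, mk, ac]; ring

/-- Candidate score of the supremum. -/
noncomputable def s0 (S : Set IFVt) : ℝ := sSup (scv '' S)
/-- Elements of `S` attaining the supremal score. -/
def T (S : Set IFVt) : Set IFVt := {x ∈ S | scv x = s0 S}
/-- Candidate accuracy of the supremum. -/
noncomputable def h0 (S : Set IFVt) : ℝ := max |s0 S| (sSup (acv '' T S))

lemma s0_le_one (S : Set IFVt) : s0 S ≤ 1 :=
  Real.sSup_le (by rintro y ⟨x, _, rfl⟩; exact scv_le_one x) one_pos.le

lemma bddAbove_scv (S : Set IFVt) : BddAbove (scv '' S) :=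
  ⟨1, by rintro y ⟨x, _, rfl⟩; exact scv_le_one x⟩

lemma h0_le_one (S : Set IFVt) : h0 S ≤ 1 := by
  refine max_le ?_ (Real.sSup_le (by rintro y ⟨x, _, rfl⟩; exact acv_le_one x) one_pos.le)
  rw [abs_le]
  refine ⟨?_, s0_le_one S⟩
  rcases Set.eq_empty_or_nonempty S with rfl | ⟨x, hx⟩
  · simp [s0, Real.sSup_empty]
  · have := le_csSup (bddAbove_scv S) (Set.mem_image_of_mem scv hx)
    have := neg_one_le_scv x
    simp only [s0]; linarith

lemma abs_s0_le_h0 (S : Set IFVt) : |s0 S| ≤ h0 S := le_max_left _ _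

open Classical in
noncomputable def supXY (S : Set IFVt) : IFVt :=
  if S.Nonempty then mk (s0 S) (h0 S) (abs_s0_le_h0 S) (h0_le_one S)
  else mk (-1) 1 (by norm_num) le_rfl

noncomputable instance : SupSet IFVt := ⟨supXY⟩

lemma isLUB_supXY (S : Set IFVt) : IsLUB S (sSup S) := by
  show IsLUB S (supXY S)
  by_cases hS : S.Nonempty
  · rw [supXY, if_pos hS]
    constructor
    · -- upper bound
      intro x hx
      rw [le_iff, scv_mk, acv_mk]
      have hxle : scv x ≤ s0 S := le_csSup (bddAbove_scv S) (Set.mem_image_of_mem scv hx)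
      rcases lt_or_eq_of_le hxle with h | h
      · exact Or.inl h
      · refine Or.inr ⟨h, ?_⟩
        have hxT : x ∈ T S := ⟨hx, h⟩
        have : acv x ≤ sSup (acv '' T S) :=
          le_csSup ⟨1, by rintro y ⟨z, _, rfl⟩; exact acv_le_one z⟩
            (Set.mem_image_of_mem acv hxT)
        exact le_trans this (le_max_right _ _)
    · -- least upper bound
      intro b hb
      rw [le_iff, scv_mk, acv_mk]
      have hs0b : s0 S ≤ scv b := by
        refine csSup_le (hS.image scv) ?_
        rintro y ⟨x, hx, rfl⟩
        rcases (le_iff x b).mp (hb hx) with h | h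
        · exact h.le
        · exact h.1.le
      rcases lt_or_eq_of_le hs0b with h | h
      · exact Or.inl h
      · refine Or.inr ⟨h, ?_⟩
        have h1 : |s0 S| ≤ acv b := h ▸ abs_scv_le b
        have h0b : 0 ≤ acv b := le_trans (abs_nonneg _) h1
        refine max_le h1 (Real.sSup_le ?_ h0b)
        rintro y ⟨x, hx, rfl⟩
        rcases (le_iff x b).mp (hb hx.1) with hlt | heq
        · exact absurd (hx.2.trans h) (ne_of_lt hlt)
        · exact heq.2
  · rw [Set.not_nonempty_iff_eq_empty] at hS
    subst hS
    rw [supXY, if_neg (by simp)]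
    constructor
    · intro x hx; exact absurd hx (Set.notMem_empty x)
    · intro b _
      rw [le_iff, scv_mk, acv_mk]
      rcases lt_or_eq_of_le (neg_one_le_scv b) with h | h
      · exact Or.inl h
      · refine Or.inr ⟨h, ?_⟩
        have := abs_scv_le b
        rw [← h] at this
        simpa using this

noncomputable instance : CompleteLattice IFVt := completeLatticeOfSup IFVt isLUB_supXY

noncomputable instance : ConditionallyCompleteLinearOrder IFVt :=
  { CompleteLattice.toConditionallyCompleteLattice (α := IFVt),
    (inferInstance : LinearOrder IFVt) with
    csSup_of_not_bddAbove := fun s H => (H (OrderTop.bddAbove s)).elim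
    csInf_of_not_bddBelow := fun s H => (H (OrderBot.bddBelow s)).elim }

instance : DenselyOrdered IFVt := by
  constructor
  intro x y hxy
  rcases (lt_iff x y).mp hxy with h | h
  · -- different scores: take the midpoint score with accuracy 1
    have hx1 := neg_one_le_scv x
    have hy1 := scv_le_one y
    have habs : |(scv x + scv y) / 2| ≤ 1 := by rw [abs_le]; constructor <;> linarith
    refine ⟨mk ((scv x + scv y) / 2) 1 habs le_rfl, ?_, ?_⟩
    · rw [lt_iff, scv_mk]; left; linarith
    · rw [lt_iff, scv_mk]; left; linarith
  · -- same score: midpoint accuracy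
    obtain ⟨hs, hh⟩ := h
    have h1 : |scv x| ≤ (acv x + acv y) / 2 := le_trans (abs_scv_le x) (by linarith)
    have h2 : (acv x + acv y) / 2 ≤ 1 := by linarith [acv_le_one y, acv_le_one x]
    refine ⟨mk (scv x) ((acv x + acv y) / 2) h1 h2, ?_, ?_⟩
    · rw [lt_iff, scv_mk, acv_mk]; right; exact ⟨rfl, by linarith⟩
    · rw [lt_iff, scv_mk, acv_mk]; right; exact ⟨hs, by linarith⟩

instance : Nonempty IFVt := ⟨⟨(0, 0), by norm_num [IFV]⟩⟩

end IFVaux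

/-- Ĩ with the order topology induced by <_XY is connected. -/
theorem ifv_connectedSpace : ConnectedSpace IFVt := by
  haveI : PreconnectedSpace IFVt := ordered_connected_space
  exact { toPreconnectedSpace := inferInstance, toNonempty := inferInstance }
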